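/- If a·g_s > m₂, then the point E₂ = (P₂, Z₂, 0) with P₂ = m₂k_Z/(a g_s − m₂) and Z₂ = a m₁ k_Z (a k_P g_s − k_P m₂ − m₂ k_Z) / ((a g_s − m₂)² k_P) is an equilibrium of the PZF system, i.e. the right-hand side of the system vanishes at E₂; moreover P₂ > 0, and Z₂ > 0 if and only if a k_P g_s > m₂(k_P + k_Z). -/
import Mathlib


/-- If `a·g_s > m₂`, the boundary point `E₂ = (P₂, Z₂, 0)` is an equilibrium of
the PZF system; moreover `P₂ > 0`, and `Z₂ > 0 ↔ a·k_P·g_s > m₂·(k_P + k_Z)`. -/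
theorem pzf_boundary_equilibrium
    (m₁ m₂ m₃ a g_s g_f k_P k_Z k_F : ℝ)
    (hm₁ : 0 < m₁) (hm₂ : 0 < m₂) (hm₃ : 0 < m₃) (ha : 0 < a)
    (hgs : 0 < g_s) (hgf : 0 < g_f) (hkP : 0 < k_P) (hkZ : 0 < k_Z) (hkF : 0 < k_F)
    (hags : m₂ < a * g_s)
    (P₂ Z₂ : ℝ)
    (hP₂ : P₂ = m₂ * k_Z / (a * g_s - m₂))
    (hZ₂ : Z₂ = a * m₁ * k_Z * (a * k_P * g_s - k_P * m₂ - m₂ * k_Z)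
      / ((a * g_s - m₂) ^ 2 * k_P)) :
    (m₁ * P₂ * (1 - P₂ / k_P) - g_s * P₂ * Z₂ / (P₂ + k_Z) = 0 ∧
     a * g_s * P₂ * Z₂ / (P₂ + k_Z) - g_f * Z₂ * 0 / (Z₂ + k_F) - m₂ * Z₂ = 0 ∧
     g_f * Z₂ * 0 / (Z₂ + k_F) - m₃ * 0 = 0) ∧
    0 < P₂ ∧
    (0 < Z₂ ↔ m₂ * (k_P + k_Z) < a * k_P * g_s) := by
  have hd : 0 < a * g_s - m₂ := by linarith
  have hd0 : a * g_s - m₂ ≠ 0 := ne_of_gt hd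
  have hP₂pos : 0 < P₂ := by
    rw [hP₂]; positivity
  have hPkZ : P₂ + k_Z ≠ 0 := by positivity
  have hZF : 0 < Z₂ + k_F ∨ Z₂ + k_F = 0 ∨ Z₂ + k_F < 0 := by
    rcases lt_trichotomy (Z₂ + k_F) 0 with h|h|h
    · exact Or.inr (Or.inr h)
    · exact Or.inr (Or.inl h)
    · exact Or.inl h
  refine ⟨⟨?_, ?_, ?_⟩, hP₂pos, ?_⟩
  · subst hP₂ hZ₂
    field_simp
    ring
  · subst hP₂ hZ₂
    field_simp
    ring
  · simp
  · rw [hZ₂]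
    rw [div_pos_iff]
    constructor
    · rintro (⟨h1, _⟩ | ⟨_, h2⟩)
      · nlinarith [mul_pos (mul_pos ha hm₁) hkZ]
      · exfalso; nlinarith [sq_nonneg (a * g_s - m₂)]
    · intro h
      left
      constructor
      · nlinarith [mul_pos (mul_pos ha hm₁) hkZ]
      · positivity
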